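/- Let (λ*,μ*) ∈ D be a global minimizer of G_X with Y* = M_{λ*,μ*}^{−1}X ∈ V. Then ‖X − Y*‖ ≤ 2^{3/4} ‖X‖^{1/2} (|XᵀAX| + |XᵀBX|)^{1/4}; in particular X ∈ V implies Y* = X. -/

import Mathlib

open Matrix

/-- The 8×8 matrix `A = diag(S, -S, S, -S)` with `S = [[1,0],[0,0]]`. -/
noncomputable def A : Matrix (Fin 8) (Fin 8) ℝ :=
  !![1,0,0,0,0,0,0,0;
     0,0,0,0,0,0,0,0;
     0,0,-1,0,0,0,0,0;
     0,0,0,0,0,0,0,0;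
     0,0,0,0,1,0,0,0;
     0,0,0,0,0,0,0,0;
     0,0,0,0,0,0,-1,0;
     0,0,0,0,0,0,0,0]

/-- The 8×8 matrix `B = diag(T, -T, T, -T)` with `T = [[0,1],[1,0]]`. -/
noncomputable def B : Matrix (Fin 8) (Fin 8) ℝ :=
  !![0,1,0,0,0,0,0,0;
     1,0,0,0,0,0,0,0;
     0,0,0,-1,0,0,0,0;
     0,0,-1,0,0,0,0,0;
     0,0,0,0,0,1,0,0;
     0,0,0,0,1,0,0,0;
     0,0,0,0,0,0,0,-1;
     0,0,0,0,0,0,-1,0]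

/-- The matrix `M_{λ,μ} = I + λA + μB`. -/
noncomputable def M (l m : ℝ) : Matrix (Fin 8) (Fin 8) ℝ := 1 + l • A + m • B

/-!
Write `E = λA + μB`, so that `M_{λ,μ} = 1 + E`, and `Y = (1 + E)⁻¹ X`. Along the segment
`s ↦ 1 + sE`, `s ∈ (0, 1]`, every matrix is positive definite, and
`Xᵀ(1 + sE)⁻¹X - Xᵀ(1 + E)⁻¹X = (1 - s) Xᵀ(1 + sE)⁻¹ E Y`. Minimality at `s = 1` and continuity
of the inverse give the first-order condition `YᵀEY ≥ 0`. Since `X - Y = EY`, expanding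
`XᵀEX = YᵀEY + 2‖EY‖² + (EY)ᵀE(EY)` and using `1 + E ≥ 0` yields `‖X - Y‖² ≤ XᵀEX`. Finally
`XᵀEX = λ XᵀAX + μ XᵀBX ≤ |XᵀAX| + |XᵀBX| ≤ 2‖X‖²`, because `|λ|, |μ| ≤ 1` on `D` and
`|xᵀAx|, |xᵀBx| ≤ ‖x‖²`.
-/

open Set Filter

namespace Matrix

variable {n : Type*} [DecidableEq n] {E : Matrix n n ℝ}

lemma PosDef.one_add_smul (hE : (1 + E).PosDef) {s : ℝ} (hs₀ : 0 < s) (hs₁ : s ≤ 1) :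
    (1 + s • E).PosDef := by
  have h : 1 + s • E = (1 - s) • (1 : Matrix n n ℝ) + s • (1 + E) := by module
  rw [h]
  exact PosDef.posSemidef_add (PosSemidef.one.smul (sub_nonneg.2 hs₁)) (hE.smul hs₀)

variable [Fintype n]

lemma continuousAt_inv_one_add_smul (hE : IsUnit (1 + E).det) :
    ContinuousAt (fun s : ℝ => (1 + s • E)⁻¹) 1 := by
  have hinv := continuousAt_matrix_inv (1 + E) (NormedRing.inverse_continuousAt hE.unit)
  refine ContinuousAt.comp (f := fun s : ℝ => 1 + s • E) ?_ (by fun_prop)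
  simpa using hinv

theorem inv_one_add_smul_sub_inv (hE : (1 + E).PosDef) {s : ℝ} (hs₀ : 0 < s) (hs₁ : s ≤ 1) :
    (1 + s • E)⁻¹ - (1 + E)⁻¹ = (1 - s) • ((1 + s • E)⁻¹ * E * (1 + E)⁻¹) := by
  rw [inv_sub_inv (iff_of_true (hE.one_add_smul hs₀ hs₁).isUnit hE.isUnit)]
  have : 1 + E - (1 + s • E) = (1 - s) • E := by module
  rw [this, Matrix.mul_smul, Matrix.smul_mul]

lemma PosDef.inv_transpose {P : Matrix n n ℝ} (hP : P.PosDef) : P⁻¹ᵀ = P⁻¹ := by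
  rw [transpose_nonsing_inv, ← conjTranspose_eq_transpose_of_trivial, hP.isHermitian.eq]

theorem inv_mulVec_dotProduct_mulVec_nonneg (hE : (1 + E).PosDef) (X : n → ℝ)
    (hmin : ∀ s ∈ Ioo (0 : ℝ) 1, X ⬝ᵥ (1 + E)⁻¹ *ᵥ X ≤ X ⬝ᵥ (1 + s • E)⁻¹ *ᵥ X) :
    0 ≤ (1 + E)⁻¹ *ᵥ X ⬝ᵥ E *ᵥ ((1 + E)⁻¹ *ᵥ X) := by
  set v := E *ᵥ ((1 + E)⁻¹ *ᵥ X)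
  set f : ℝ → ℝ := fun s => X ⬝ᵥ (1 + s • E)⁻¹ *ᵥ v
  have hf : ∀ s ∈ Ioo (0 : ℝ) 1, 0 ≤ f s := by
    intro s hs
    have h := sub_nonneg.2 (hmin s hs)
    rw [← dotProduct_sub, ← sub_mulVec, inv_one_add_smul_sub_inv hE hs.1 hs.2.le, smul_mulVec,
      dotProduct_smul, smul_eq_mul, ← mulVec_mulVec, ← mulVec_mulVec] at h
    exact nonneg_of_mul_nonneg_right h (sub_pos.2 hs.2)
  have hcont : ContinuousAt f 1 :=
    ((continuous_const.dotProduct (continuous_id.matrix_mulVec continuous_const)).continuousAt).comp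
      (continuousAt_inv_one_add_smul ((isUnit_iff_isUnit_det _).1 hE.isUnit))
  have h1 : 0 ≤ f 1 := ge_of_tendsto (hcont.tendsto.mono_left nhdsWithin_le_nhds)
    (eventually_of_mem (Ioo_mem_nhdsLT zero_lt_one) hf)
  simp only [f, one_smul] at h1
  rwa [dotProduct_mulVec, ← mulVec_transpose, hE.inv_transpose] at h1

lemma dotProduct_mulVec_self_le (hE : (1 + E).PosSemidef) {Y : n → ℝ}
    (hY : 0 ≤ Y ⬝ᵥ E *ᵥ Y) : E *ᵥ Y ⬝ᵥ E *ᵥ Y ≤ (1 + E) *ᵥ Y ⬝ᵥ E *ᵥ ((1 + E) *ᵥ Y) := by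
  have hsymm : E.IsSymm := by
    simpa [conjTranspose_eq_transpose_of_trivial] using hE.isHermitian.sub isHermitian_one
  have hw : Y ⬝ᵥ E *ᵥ (E *ᵥ Y) = E *ᵥ Y ⬝ᵥ E *ᵥ Y := by
    rw [dotProduct_mulVec, ← mulVec_transpose, hsymm.eq]
  have hpsd := hE.dotProduct_mulVec_nonneg (E *ᵥ Y)
  simp only [star_trivial, add_mulVec, one_mulVec, dotProduct_add, add_dotProduct, mulVec_add]
    at hpsd ⊢
  linarith

theorem sub_inv_mulVec_dotProduct_le (hE : (1 + E).PosDef) (X : n → ℝ)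
    (hmin : ∀ s ∈ Ioo (0 : ℝ) 1, X ⬝ᵥ (1 + E)⁻¹ *ᵥ X ≤ X ⬝ᵥ (1 + s • E)⁻¹ *ᵥ X) :
    (X - (1 + E)⁻¹ *ᵥ X) ⬝ᵥ (X - (1 + E)⁻¹ *ᵥ X) ≤ X ⬝ᵥ E *ᵥ X := by
  set Y := (1 + E)⁻¹ *ᵥ X
  have hX : (1 + E) *ᵥ Y = X := by
    rw [mulVec_mulVec, mul_nonsing_inv _ ((isUnit_iff_isUnit_det _).1 hE.isUnit), one_mulVec]
  have hw : X - Y = E *ᵥ Y := by rw [← hX, add_mulVec, one_mulVec, add_sub_cancel_left]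
  rw [hw, ← hX]
  exact dotProduct_mulVec_self_le hE.posSemidef (inv_mulVec_dotProduct_mulVec_nonneg hE X hmin)

end Matrix

lemma dotProduct_A_mulVec (x : Fin 8 → ℝ) : x ⬝ᵥ A *ᵥ x = x 0^2 - x 2^2 + x 4^2 - x 6^2 := by
  simp only [dotProduct, mulVec, A, of_apply, cons_val', cons_val_fin_one, Fin.sum_univ_eight,
    cons_val_zero, cons_val_one, cons_val]
  ring

lemma dotProduct_B_mulVec (x : Fin 8 → ℝ) :
    x ⬝ᵥ B *ᵥ x = 2 * (x 0 * x 1 - x 2 * x 3 + x 4 * x 5 - x 6 * x 7) := by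
  simp only [dotProduct, mulVec, B, of_apply, cons_val', cons_val_fin_one, Fin.sum_univ_eight,
    cons_val_zero, cons_val_one, cons_val]
  ring

lemma dotProduct_self_eq (x : Fin 8 → ℝ) :
    x ⬝ᵥ x = x 0^2 + x 1^2 + x 2^2 + x 3^2 + x 4^2 + x 5^2 + x 6^2 + x 7^2 := by
  simp only [dotProduct, Fin.sum_univ_eight]
  ring

lemma M_mul_mul (s l m : ℝ) : M (s * l) (s * m) = 1 + s • (l • A + m • B) := by
  rw [M]; module

lemma dotProduct_M_mulVec (l m : ℝ) (x : Fin 8 → ℝ) :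
    x ⬝ᵥ M l m *ᵥ x = x ⬝ᵥ x + l * (x ⬝ᵥ A *ᵥ x) + m * (x ⬝ᵥ B *ᵥ x) := by
  simp only [M, add_mulVec, one_mulVec, smul_mulVec, dotProduct_add, dotProduct_smul, smul_eq_mul]

lemma abs_add_sq_lt_one_of_posDef {l m : ℝ} (h : (M l m).PosDef) : |l| + m ^ 2 < 1 := by
  have key : ∀ x : Fin 8 → ℝ, x ≠ 0 → 0 < x ⬝ᵥ x + l * (x ⬝ᵥ A *ᵥ x) + m * (x ⬝ᵥ B *ᵥ x) :=
    fun x hx => by simpa [dotProduct_M_mulVec] using h.dotProduct_mulVec_pos hx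
  have h₁ := key ![1, -m, 0, 0, 0, 0, 0, 0] (by simp [funext_iff, Fin.forall_fin_succ])
  have h₂ := key ![0, 0, 1, m, 0, 0, 0, 0] (by simp [funext_iff, Fin.forall_fin_succ])
  rw [dotProduct_A_mulVec, dotProduct_B_mulVec, dotProduct_self_eq] at h₁ h₂
  simp only [Fin.isValue, cons_val_zero, one_pow, cons_val_one, even_two, Even.neg_pow, cons_val,
    ne_eq, OfNat.ofNat_ne_zero, not_false_eq_true, zero_pow, add_zero, sub_zero, mul_one, mul_neg,
    one_mul, mul_zero, lt_add_neg_iff_add_lt, zero_add, zero_sub] at h₁ h₂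
  rcases abs_cases l with ⟨hl, -⟩ | ⟨hl, -⟩ <;> rw [hl] <;> nlinarith

lemma abs_dotProduct_A_mulVec_le (x : Fin 8 → ℝ) : |x ⬝ᵥ A *ᵥ x| ≤ x ⬝ᵥ x := by
  rw [dotProduct_A_mulVec, dotProduct_self_eq, abs_le]
  constructor <;> nlinarith [sq_nonneg (x 0), sq_nonneg (x 1), sq_nonneg (x 2),
    sq_nonneg (x 3), sq_nonneg (x 4), sq_nonneg (x 5), sq_nonneg (x 6), sq_nonneg (x 7)]

lemma abs_dotProduct_B_mulVec_le (x : Fin 8 → ℝ) : |x ⬝ᵥ B *ᵥ x| ≤ x ⬝ᵥ x := by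
  rw [dotProduct_B_mulVec, dotProduct_self_eq, abs_le]
  constructor <;> nlinarith [sq_nonneg (x 0 + x 1), sq_nonneg (x 0 - x 1),
    sq_nonneg (x 2 + x 3), sq_nonneg (x 2 - x 3), sq_nonneg (x 4 + x 5),
    sq_nonneg (x 4 - x 5), sq_nonneg (x 6 + x 7), sq_nonneg (x 6 - x 7)]

lemma mul_le_abs_of_abs_le_one {a : ℝ} (ha : |a| ≤ 1) (b : ℝ) : a * b ≤ |b| :=
  (le_abs_self _).trans (by rw [abs_mul]; exact mul_le_of_le_one_left (abs_nonneg b) ha)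

lemma sqrt_le_two_rpow_mul_sqrt_rpow_mul_rpow {P Q S : ℝ} (hQ₀ : 0 ≤ Q) (hPQ : P ≤ Q)
    (hQS : Q ≤ 2 * S) :
    √P ≤ 2 ^ ((3 : ℝ) / 4) * √S ^ ((1 : ℝ) / 2) * Q ^ ((1 : ℝ) / 4) := by
  have hS₀ : 0 ≤ S := by linarith
  have hsqrtS : √S ^ ((1 : ℝ) / 2) = S ^ ((1 : ℝ) / 4) := by
    rw [Real.sqrt_eq_rpow, ← Real.rpow_mul hS₀]; norm_num
  calc √P ≤ √Q := Real.sqrt_le_sqrt hPQ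
    _ = Q ^ ((1 : ℝ) / 4) * Q ^ ((1 : ℝ) / 4) := by
      rw [← Real.rpow_add' hQ₀ (by norm_num), Real.sqrt_eq_rpow]; norm_num
    _ ≤ (2 * S) ^ ((1 : ℝ) / 4) * Q ^ ((1 : ℝ) / 4) := by gcongr
    _ = 2 ^ ((1 : ℝ) / 4) * √S ^ ((1 : ℝ) / 2) * Q ^ ((1 : ℝ) / 4) := by
      rw [Real.mul_rpow zero_le_two hS₀, hsqrtS]
    _ ≤ 2 ^ ((3 : ℝ) / 4) * √S ^ ((1 : ℝ) / 2) * Q ^ ((1 : ℝ) / 4) := by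
      gcongr
      · exact one_le_two
      · norm_num

/-- Error estimate for the dual projection: at a global minimizer of `G_X`,
`‖X - Y*‖ ≤ 2^{3/4} ‖X‖^{1/2} (|XᵀAX| + |XᵀBX|)^{1/4}`; in particular `X ∈ V` implies
`Y* = X`. -/
theorem minimizer_error_estimate (X : Fin 8 → ℝ) (l m : ℝ)
    (hpos : (M l m).PosDef)
    (hmin : ∀ l' m' : ℝ, (M l' m').PosDef →
      X ⬝ᵥ ((M l m)⁻¹).mulVec X ≤ X ⬝ᵥ ((M l' m')⁻¹).mulVec X) :
    Real.sqrt ((X - (M l m)⁻¹.mulVec X) ⬝ᵥ (X - (M l m)⁻¹.mulVec X))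
      ≤ (2 : ℝ) ^ ((3:ℝ)/4) * Real.sqrt (X ⬝ᵥ X) ^ ((1:ℝ)/2)
        * (|X ⬝ᵥ A.mulVec X| + |X ⬝ᵥ B.mulVec X|) ^ ((1:ℝ)/4) ∧
    (X ⬝ᵥ A.mulVec X = 0 ∧ X ⬝ᵥ B.mulVec X = 0 → (M l m)⁻¹.mulVec X = X) := by
  obtain ⟨hl, hm⟩ : |l| ≤ 1 ∧ |m| ≤ 1 := by
    have h := abs_add_sq_lt_one_of_posDef hpos
    exact ⟨by nlinarith [sq_nonneg m], sq_le_one_iff_abs_le_one m |>.1 (by linarith [abs_nonneg l])⟩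
  set E := l • A + m • B
  have hM : ∀ s : ℝ, M (s * l) (s * m) = 1 + s • E := (M_mul_mul · l m)
  have hM₁ : M l m = 1 + E := by simpa using hM 1
  rw [hM₁] at hpos hmin ⊢
  have hmin' : ∀ s ∈ Ioo (0 : ℝ) 1, X ⬝ᵥ (1 + E)⁻¹ *ᵥ X ≤ X ⬝ᵥ (1 + s • E)⁻¹ *ᵥ X := by
    intro s ⟨hs₀, hs₁⟩
    rw [← hM]
    exact hmin _ _ (by rw [hM]; exact hpos.one_add_smul hs₀ hs₁.le)
  have hXE : X ⬝ᵥ E *ᵥ X ≤ |X ⬝ᵥ A *ᵥ X| + |X ⬝ᵥ B *ᵥ X| := by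
    simp only [E, add_mulVec, smul_mulVec, dotProduct_add, dotProduct_smul, smul_eq_mul]
    exact add_le_add (mul_le_abs_of_abs_le_one hl _) (mul_le_abs_of_abs_le_one hm _)
  have herror := (sub_inv_mulVec_dotProduct_le hpos X hmin').trans hXE
  refine ⟨sqrt_le_two_rpow_mul_sqrt_rpow_mul_rpow (by positivity) herror
    (by linarith [abs_dotProduct_A_mulVec_le X, abs_dotProduct_B_mulVec_le X]), ?_⟩
  rintro ⟨hA, hB⟩
  rw [hA, hB, abs_zero, add_zero] at herror
  have hw := dotProduct_self_eq_zero.1 (le_antisymm herror (dotProduct_self_star_nonneg _))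
  exact (sub_eq_zero.1 hw).symm
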